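/- Let h : Fin 2 → Fin 2 → Fin 2 → ℝ be totally symmetric in its three indices (h i j k = h j i k and h i j k = h i k j for all i, j, k) and trace-free in the sense that h 0 0 k + h 1 1 k = 0 for each k, and let a : Fin 2 → Fin 2 → ℝ be symmetric (a i j = a j i) with a 0 0 + a 1 1 = 0. Then ∑_{k} ( 2 ∑_{i,j} a i j · h i j k )² = 2 · ( ∑_{i,j} (a i j)² ) · ( ∑_{i,j,k} (h i j k)² ). -/
import Mathlib

/-- Equation (2.7) in the proof of Theorem 2.2:
`⟨∇s, ∇s⟩ = 2 s ⟨∇A, ∇A⟩` for a minimal surface in a hyperbolic three-manifold,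
expressed in components: `a` is the traceless symmetric second fundamental form and
`h` its totally symmetric, trace-free covariant derivative. -/
theorem grad_normsq_identity (h : Fin 2 → Fin 2 → Fin 2 → ℝ)
    (hsym₁ : ∀ i j k, h i j k = h j i k)
    (hsym₂ : ∀ i j k, h i j k = h i k j)
    (htrace : ∀ k, h 0 0 k + h 1 1 k = 0)
    (a : Fin 2 → Fin 2 → ℝ)
    (hasym : ∀ i j, a i j = a j i)
    (hatrace : a 0 0 + a 1 1 = 0) :
    ∑ k : Fin 2, (2 * ∑ i : Fin 2, ∑ j : Fin 2, a i j * h i j k) ^ 2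
      = 2 * (∑ i : Fin 2, ∑ j : Fin 2, (a i j) ^ 2)
          * (∑ i : Fin 2, ∑ j : Fin 2, ∑ k : Fin 2, (h i j k) ^ 2) := by
  have h110 := htrace 0
  have h111 := htrace 1
  have e1 : h 1 1 0 = -h 0 0 0 := by linarith
  have e2 : h 1 1 1 = -h 0 0 1 := by linarith
  have ea : a 1 1 = -a 0 0 := by linarith
  simp only [Fin.sum_univ_two, hsym₁ 0 1, hsym₂ 0 0, hasym 0 1, e1, e2, ea]
  have e4 : h 1 0 1 = -h 0 0 0 := by rw [hsym₂ 1 0 1, e1]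
  have e5 : h 1 0 0 = h 0 0 1 := by rw [hsym₁ 1 0 0, hsym₂ 0 0 1]
  rw [e4, e5]
  ring
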